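/- Lyapunov exponent localization: Let [aᵢ,bᵢ] be a bounded connected component of the nonuniform μ-dichotomy spectrum Σ^{ND}_μ(A) and let W_i = U_{γᵢ} ∩ V_{γᵢ₋₁} for resolvent points γᵢ₋₁ < aᵢ ≤ bᵢ < γᵢ. Then for every (s,v) ∈ W_i with v ≠ 0, the μ-Lyapunov exponents satisfy aᵢ ≤ λ⁻(v) ≤ λ⁺(v) ≤ bᵢ, where λ⁺(v) = limsup_{t→+∞} log‖Φ(t,s)v‖ / log μ(t) and λ⁻(v) = liminf_{t→+∞} log‖Φ(t,s)v‖ / log μ(t). -/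

import Mathlib

open Filter Topology

noncomputable section

/-- Bounded linear operators on ℝⁿ. -/
abbrev Op (n : ℕ) := EuclideanSpace ℝ (Fin n) →L[ℝ] EuclideanSpace ℝ (Fin n)

/-- μ is a growth rate: strictly increasing, positive, μ(0)=1, μ→∞ at +∞, μ→0 at -∞. -/
def GrowthRate (μ : ℝ → ℝ) : Prop :=
  StrictMono μ ∧ (∀ t, 0 < μ t) ∧ μ 0 = 1 ∧
    Tendsto μ atTop atTop ∧ Tendsto μ atBot (nhds 0)

/-- The evolution operator Ψ admits a nonuniform μ-dichotomy with invariant projections P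
and constants K, α, β, θ, ν. -/
def NuDWith {n : ℕ} (μ : ℝ → ℝ) (Ψ : ℝ → ℝ → Op n) (P : ℝ → Op n)
    (K α β θ ν : ℝ) : Prop :=
  (∀ t, P t ∘L P t = P t) ∧
  (∀ t s, P t ∘L Ψ t s = Ψ t s ∘L P s) ∧
  1 ≤ K ∧ α < 0 ∧ 0 < β ∧ 0 ≤ θ ∧ 0 ≤ ν ∧ α + θ < 0 ∧ 0 < β - ν ∧
  (∀ t s, s ≤ t → ‖Ψ t s ∘L P s‖ ≤ K * (μ t / μ s) ^ α * μ s ^ (Real.sign s * θ)) ∧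
  (∀ t s, t ≤ s → ‖Ψ t s ∘L (1 - P s)‖ ≤ K * (μ t / μ s) ^ β * μ s ^ (Real.sign s * ν))

/-- The evolution operator Ψ admits a nonuniform μ-dichotomy. -/
def NuD {n : ℕ} (μ : ℝ → ℝ) (Ψ : ℝ → ℝ → Op n) : Prop :=
  ∃ P K α β θ ν, NuDWith μ Ψ P K α β θ ν

/-- The evolution operator Φ_γ(t,s) = (μ(t)/μ(s))^{-γ} Φ(t,s) of the shifted system. -/
def shiftEvo {n : ℕ} (μ : ℝ → ℝ) (γ : ℝ) (Φ : ℝ → ℝ → Op n) : ℝ → ℝ → Op n :=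
  fun t s => (μ t / μ s) ^ (-γ) • Φ t s

/-- The nonuniform μ-resolvent set. -/
def resolventND {n : ℕ} (μ : ℝ → ℝ) (Φ : ℝ → ℝ → Op n) : Set ℝ :=
  {γ | NuD μ (shiftEvo μ γ Φ)}

/-- The nonuniform μ-dichotomy spectrum. -/
def spectrumND {n : ℕ} (μ : ℝ → ℝ) (Φ : ℝ → ℝ → Op n) : Set ℝ :=
  (resolventND μ Φ)ᶜ

/-- Φ is the evolution operator of x' = A(t)x. -/
def IsEvolutionOp {n : ℕ} (A : ℝ → Op n) (Φ : ℝ → ℝ → Op n) : Prop :=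
  (∀ s, Φ s s = 1) ∧ (∀ t τ s, Φ t τ ∘L Φ τ s = Φ t s) ∧
    (∀ s t, HasDerivAt (fun r => Φ r s) (A t ∘L Φ t s) t)

/-- U_γ = {(s,ξ) : sup_{t ≥ 0} ‖Φ(t,s)ξ‖ μ(t)^{-γ} < ∞}. -/
def Uset {n : ℕ} (μ : ℝ → ℝ) (Φ : ℝ → ℝ → Op n) (γ : ℝ) : Set (ℝ × EuclideanSpace ℝ (Fin n)) :=
  {p | ∃ C, ∀ t, 0 ≤ t → ‖Φ t p.1 p.2‖ * μ t ^ (-γ) ≤ C}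

/-- V_γ = {(s,ξ) : sup_{t ≤ 0} ‖Φ(t,s)ξ‖ μ(t)^{-γ} < ∞}. -/
def Vset {n : ℕ} (μ : ℝ → ℝ) (Φ : ℝ → ℝ → Op n) (γ : ℝ) : Set (ℝ × EuclideanSpace ℝ (Fin n)) :=
  {p | ∃ C, ∀ t, t ≤ 0 → ‖Φ t p.1 p.2‖ * μ t ^ (-γ) ≤ C}

/-!
Write `N t = ‖Φ t s v‖`. At a resolvent point `γ` the dichotomy of the shifted system gives
`N = O(μ^(γ+α))` forward on the stable space and `N = O(μ^(γ+β))` backward on the unstable one.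
Pulling these estimates back along `Φ s t`, a forward bound `N = O(μ^δ)` with `δ < γ + (β - ν)`
forces `v` into the stable space, and a backward bound with `δ > γ + α + θ` forces it into the
unstable space, where `N` grows forward at least like `μ^(γ+β-ν)`. So a forward bound just above
`γ` improves to one below `γ`, and the bound from `v ∈ U_{γ''}` sweeps down through the resolvent
interval `(b, γ'']`: `N = O(μ^x)` for all `x > b`. Dually the backward bound from `v ∈ V_{γ'}`
sweeps up through `[γ', a)`, and at each `x < a` it puts `v` in the unstable space, so `N` grows
faster than `μ^x`. Taking logarithms bounds the Lyapunov exponents.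
-/

open Asymptotics

lemma forall_mem_Ioc_of_step {F : ℝ → Prop} {b γ : ℝ}
    (hmono : ∀ δ δ', δ ≤ δ' → F δ → F δ')
    (hstep : ∀ c ∈ Set.Ioc b γ, ∃ ε > 0, F (c + ε) → F (c - ε)) (hγ : F γ) :
    ∀ x ∈ Set.Ioc b γ, F x := by
  intro x hx
  set E := {δ | x ≤ δ ∧ F δ}
  have hE : E.Nonempty := ⟨γ, hx.2, hγ⟩
  have hxc : x ≤ sInf E := le_csInf hE fun δ hδ => hδ.1
  have hbdd : BddBelow E := ⟨x, fun δ hδ => hδ.1⟩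
  obtain ⟨ε, hε, himp⟩ := hstep (sInf E) ⟨hx.1.trans_le hxc, csInf_le hbdd ⟨hx.2, hγ⟩⟩
  obtain ⟨δ, hδE, hδlt⟩ := exists_lt_of_csInf_lt hE (lt_add_of_pos_right (sInf E) hε)
  have hbelow := himp (hmono _ _ hδlt.le hδE.2)
  rcases le_or_gt x (sInf E - ε) with hle | hlt
  · linarith [csInf_le hbdd ⟨hle, hbelow⟩]
  · exact hmono _ _ hlt.le hbelow

lemma forall_mem_Ico_of_step {G : ℝ → Prop} {γ a : ℝ}
    (hanti : ∀ δ δ', δ' ≤ δ → G δ → G δ')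
    (hstep : ∀ c ∈ Set.Ico γ a, ∃ ε > 0, G (c - ε) → G (c + ε)) (hγ : G γ) :
    ∀ x ∈ Set.Ico γ a, G x := by
  have key := forall_mem_Ioc_of_step (F := fun δ => G (-δ)) (b := -a) (γ := -γ)
    (fun δ δ' h => hanti _ _ (neg_le_neg h))
    (fun c hc => by
      obtain ⟨ε, hε, h⟩ := hstep (-c) ⟨le_neg.2 hc.2, neg_lt.1 hc.1⟩
      exact ⟨ε, hε, by convert h using 2 <;> ring⟩)
    (by simpa using hγ)
  intro x hx
  simpa using key (-x) ⟨neg_lt_neg hx.2, neg_le_neg hx.1⟩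

lemma le_liminf_and_liminf_le_limsup_and_limsup_le {ι : Type*} {l : Filter ι} [l.NeBot]
    {f : ι → ℝ} {a b : ℝ} (hlow : ∀ y < a, ∀ᶠ t in l, y ≤ f t)
    (hup : ∀ y > b, ∀ᶠ t in l, f t ≤ y) :
    a ≤ liminf f l ∧ liminf f l ≤ limsup f l ∧ limsup f l ≤ b := by
  have hbddAbove : l.IsBoundedUnder (· ≤ ·) f :=
    isBoundedUnder_of_eventually_le (hup (b + 1) (by linarith))
  have hbddBelow : l.IsBoundedUnder (· ≥ ·) f :=
    isBoundedUnder_of_eventually_ge (hlow (a - 1) (by linarith))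
  refine ⟨le_of_forall_lt_imp_le_of_dense fun y hy => ?_, liminf_le_limsup hbddAbove hbddBelow,
    le_of_forall_gt_imp_ge_of_dense fun y hy => ?_⟩
  · exact le_liminf_of_le hbddAbove.isCoboundedUnder_ge (hlow y hy)
  · exact limsup_le_of_le hbddBelow.isCoboundedUnder_le (hup y hy)

namespace GrowthRate

variable {μ : ℝ → ℝ}

lemma pos (hgr : GrowthRate μ) (t : ℝ) : 0 < μ t := hgr.2.1 t

lemma tendsto_atTop (hgr : GrowthRate μ) : Tendsto μ atTop atTop := hgr.2.2.2.1

lemma tendsto_atBot (hgr : GrowthRate μ) : Tendsto μ atBot (𝓝 0) := hgr.2.2.2.2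

lemma tendsto_rpow_atTop_of_neg (hgr : GrowthRate μ) {e : ℝ} (he : e < 0) :
    Tendsto (fun t => μ t ^ e) atTop (𝓝 0) := by
  have h := (tendsto_rpow_neg_atTop (neg_pos.2 he)).comp hgr.tendsto_atTop
  rwa [neg_neg] at h

lemma tendsto_rpow_atBot_of_pos (hgr : GrowthRate μ) {e : ℝ} (he : 0 < e) :
    Tendsto (fun t => μ t ^ e) atBot (𝓝 0) := by
  have h := (Real.continuousAt_rpow_const 0 e (Or.inr he.le)).tendsto.comp hgr.tendsto_atBot
  rwa [Real.zero_rpow he.ne'] at h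

lemma isBigO_rpow_atTop (hgr : GrowthRate μ) {δ δ' : ℝ} (h : δ ≤ δ') :
    (fun t => μ t ^ δ) =O[atTop] fun t => μ t ^ δ' := by
  refine IsBigO.of_bound' ?_
  filter_upwards [hgr.tendsto_atTop.eventually_ge_atTop 1] with t ht
  simp only [Real.norm_eq_abs, abs_of_pos (Real.rpow_pos_of_pos (hgr.pos t) _)]
  exact Real.rpow_le_rpow_of_exponent_le ht h

lemma isBigO_rpow_atBot (hgr : GrowthRate μ) {δ δ' : ℝ} (h : δ' ≤ δ) :
    (fun t => μ t ^ δ) =O[atBot] fun t => μ t ^ δ' := by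
  refine IsBigO.of_bound' ?_
  filter_upwards [hgr.tendsto_atBot.eventually (eventually_le_nhds one_pos)] with t ht
  simp only [Real.norm_eq_abs, abs_of_pos (Real.rpow_pos_of_pos (hgr.pos t) _)]
  exact Real.rpow_le_rpow_of_exponent_ge (hgr.pos t) ht h

lemma isLittleO_rpow_atTop (hgr : GrowthRate μ) {x y : ℝ} (h : x < y) :
    (fun t => μ t ^ x) =o[atTop] fun t => μ t ^ y := by
  have hsmall : (fun t => μ t ^ (x - y)) =o[atTop] fun _ => (1 : ℝ) :=
    (isLittleO_one_iff ℝ).2 (hgr.tendsto_rpow_atTop_of_neg (by linarith))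
  refine (hsmall.mul_isBigO (isBigO_refl (fun t => μ t ^ y) _)).congr (fun t => ?_) (by simp)
  rw [← Real.rpow_add (hgr.pos t), sub_add_cancel]

lemma isBigO_div_const_rpow (hgr : GrowthRate μ) (s e : ℝ) (l : Filter ℝ) :
    (fun t => (μ t / μ s) ^ e) =O[l] fun t => μ t ^ e := by
  refine ((isBigO_refl (fun t => μ t ^ e) l).const_mul_left (μ s ^ e)⁻¹).congr_left fun t => ?_
  rw [Real.div_rpow (hgr.pos t).le (hgr.pos s).le, div_eq_inv_mul]

lemma isBigO_const_div_rpow (hgr : GrowthRate μ) (s e : ℝ) (l : Filter ℝ) :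
    (fun t => (μ s / μ t) ^ e) =O[l] fun t => μ t ^ (-e) := by
  refine ((isBigO_refl (fun t => μ t ^ (-e)) l).const_mul_left (μ s ^ e)).congr_left fun t => ?_
  rw [Real.div_rpow (hgr.pos s).le (hgr.pos t).le, Real.rpow_neg (hgr.pos t).le, div_eq_mul_inv]

lemma eventually_log_div_log_le (hgr : GrowthRate μ) {N : ℝ → ℝ} (hN : ∀ t, 0 < N t) {x y : ℝ}
    (hO : N =O[atTop] fun t => μ t ^ x) (hxy : x < y) :
    ∀ᶠ t in atTop, Real.log (N t) / Real.log (μ t) ≤ y := by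
  filter_upwards [(hO.trans_isLittleO (hgr.isLittleO_rpow_atTop hxy)).bound one_pos,
    hgr.tendsto_atTop.eventually_gt_atTop 1] with t hle hμ
  rw [div_le_iff₀ (Real.log_pos hμ), ← Real.log_rpow (hgr.pos t)]
  refine Real.log_le_log (hN t) ?_
  rwa [one_mul, Real.norm_of_nonneg (hN t).le,
    Real.norm_of_nonneg (Real.rpow_pos_of_pos (hgr.pos t) y).le] at hle

lemma eventually_le_log_div_log (hgr : GrowthRate μ) {N : ℝ → ℝ} {x y : ℝ}
    (hO : (fun t => μ t ^ x) =O[atTop] N) (hyx : y < x) :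
    ∀ᶠ t in atTop, y ≤ Real.log (N t) / Real.log (μ t) := by
  filter_upwards [((hgr.isLittleO_rpow_atTop hyx).trans_isBigO hO).bound one_pos,
    hgr.tendsto_atTop.eventually_gt_atTop 1] with t hle hμ
  have hpos := Real.rpow_pos_of_pos (hgr.pos t) y
  rw [le_div_iff₀ (Real.log_pos hμ), ← Real.log_rpow (hgr.pos t)]
  rw [one_mul, Real.norm_of_nonneg hpos.le, Real.norm_eq_abs] at hle
  exact (Real.log_le_log hpos hle).trans_eq (Real.log_abs _)

end GrowthRate

section Dichotomy

variable {n : ℕ} {A : ℝ → Op n} {Φ : ℝ → ℝ → Op n} {μ : ℝ → ℝ}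

lemma IsEvolutionOp.apply_apply (hΦ : IsEvolutionOp A Φ) (t s : ℝ)
    (w : EuclideanSpace ℝ (Fin n)) : Φ s t (Φ t s w) = w := by
  have h := DFunLike.congr_fun (hΦ.2.1 s t s) w
  rw [hΦ.1 s] at h
  simpa using h

lemma norm_evo_eq_rpow_mul_norm_shiftEvo (hgr : GrowthRate μ) (c t s : ℝ)
    (w : EuclideanSpace ℝ (Fin n)) :
    ‖Φ t s w‖ = (μ t / μ s) ^ c * ‖shiftEvo μ c Φ t s w‖ := by
  have hq : 0 < μ t / μ s := div_pos (hgr.pos t) (hgr.pos s)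
  rw [shiftEvo, smul_apply, norm_smul, Real.norm_of_nonneg
    (Real.rpow_pos_of_pos hq _).le, ← mul_assoc, ← Real.rpow_add hq, add_neg_cancel,
    Real.rpow_zero, one_mul]

namespace NuDWith

variable {P : ℝ → Op n} {K α β θ ν c : ℝ}

lemma proj_evo_eq_evo_proj (hgr : GrowthRate μ) (hd : NuDWith μ (shiftEvo μ c Φ) P K α β θ ν)
    (t s : ℝ) (w : EuclideanSpace ℝ (Fin n)) : P t (Φ t s w) = Φ t s (P s w) := by
  have h := DFunLike.congr_fun (hd.2.1 t s) w
  simp only [ContinuousLinearMap.comp_apply, shiftEvo, smul_apply, map_smul] at h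
  exact smul_right_injective _ (Real.rpow_pos_of_pos (div_pos (hgr.pos t) (hgr.pos s)) _).ne' h

lemma norm_evo_proj_le (hgr : GrowthRate μ) (hd : NuDWith μ (shiftEvo μ c Φ) P K α β θ ν)
    {t s : ℝ} (hst : s ≤ t) (w : EuclideanSpace ℝ (Fin n)) :
    ‖Φ t s (P s w)‖ ≤ K * (μ t / μ s) ^ (c + α) * μ s ^ (Real.sign s * θ) * ‖w‖ := by
  obtain ⟨-, -, -, -, -, -, -, -, -, hstable, -⟩ := hd
  have hq : 0 < μ t / μ s := div_pos (hgr.pos t) (hgr.pos s)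
  calc ‖Φ t s (P s w)‖ = (μ t / μ s) ^ c * ‖(shiftEvo μ c Φ t s ∘L P s) w‖ :=
        norm_evo_eq_rpow_mul_norm_shiftEvo hgr c t s _
    _ ≤ (μ t / μ s) ^ c * (K * (μ t / μ s) ^ α * μ s ^ (Real.sign s * θ) * ‖w‖) := by
        gcongr
        exact (ContinuousLinearMap.le_opNorm _ _).trans (by gcongr; exact hstable t s hst)
    _ = K * (μ t / μ s) ^ (c + α) * μ s ^ (Real.sign s * θ) * ‖w‖ := by
        rw [Real.rpow_add hq]; ring

lemma norm_evo_compl_le (hgr : GrowthRate μ) (hd : NuDWith μ (shiftEvo μ c Φ) P K α β θ ν)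
    {t s : ℝ} (hts : t ≤ s) (w : EuclideanSpace ℝ (Fin n)) :
    ‖Φ t s (w - P s w)‖ ≤ K * (μ t / μ s) ^ (c + β) * μ s ^ (Real.sign s * ν) * ‖w‖ := by
  obtain ⟨-, -, -, -, -, -, -, -, -, -, hunstable⟩ := hd
  have hq : 0 < μ t / μ s := div_pos (hgr.pos t) (hgr.pos s)
  have hcompl : (shiftEvo μ c Φ t s ∘L (1 - P s)) w = shiftEvo μ c Φ t s (w - P s w) := by
    simp
  calc ‖Φ t s (w - P s w)‖ = (μ t / μ s) ^ c * ‖(shiftEvo μ c Φ t s ∘L (1 - P s)) w‖ := by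
        rw [hcompl, norm_evo_eq_rpow_mul_norm_shiftEvo hgr c t s]
    _ ≤ (μ t / μ s) ^ c * (K * (μ t / μ s) ^ β * μ s ^ (Real.sign s * ν) * ‖w‖) := by
        gcongr
        exact (ContinuousLinearMap.le_opNorm _ _).trans (by gcongr; exact hunstable t s hts)
    _ = K * (μ t / μ s) ^ (c + β) * μ s ^ (Real.sign s * ν) * ‖w‖ := by
        rw [Real.rpow_add hq]; ring

lemma isBigO_evo_proj_atTop (hgr : GrowthRate μ) (hd : NuDWith μ (shiftEvo μ c Φ) P K α β θ ν)
    (s : ℝ) (w : EuclideanSpace ℝ (Fin n)) :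
    (fun t => ‖Φ t s (P s w)‖) =O[atTop] fun t => μ t ^ (c + α) := by
  refine IsBigO.trans ?_ (hgr.isBigO_div_const_rpow s (c + α) atTop)
  refine IsBigO.of_bound (K * μ s ^ (Real.sign s * θ) * ‖w‖) ?_
  filter_upwards [eventually_ge_atTop s] with t hst
  rw [norm_norm, Real.norm_of_nonneg (Real.rpow_pos_of_pos (div_pos (hgr.pos t) (hgr.pos s)) _).le]
  linarith [hd.norm_evo_proj_le hgr hst w]

lemma isBigO_evo_compl_atBot (hgr : GrowthRate μ) (hd : NuDWith μ (shiftEvo μ c Φ) P K α β θ ν)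
    (s : ℝ) (w : EuclideanSpace ℝ (Fin n)) :
    (fun t => ‖Φ t s (w - P s w)‖) =O[atBot] fun t => μ t ^ (c + β) := by
  refine IsBigO.trans ?_ (hgr.isBigO_div_const_rpow s (c + β) atBot)
  refine IsBigO.of_bound (K * μ s ^ (Real.sign s * ν) * ‖w‖) ?_
  filter_upwards [eventually_le_atBot s] with t hts
  rw [norm_norm, Real.norm_of_nonneg (Real.rpow_pos_of_pos (div_pos (hgr.pos t) (hgr.pos s)) _).le]
  linarith [hd.norm_evo_compl_le hgr hts w]

lemma isBigO_proj_atBot (hΦ : IsEvolutionOp A Φ) (hgr : GrowthRate μ)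
    (hd : NuDWith μ (shiftEvo μ c Φ) P K α β θ ν) (s : ℝ) (w : EuclideanSpace ℝ (Fin n)) :
    (fun _ : ℝ => ‖P s w‖) =O[atBot] fun t => μ t ^ (-(c + α) - θ) * ‖Φ t s w‖ := by
  have hbound : ∀ᶠ t in atBot,
      ‖‖P s w‖‖ ≤ K * ‖(μ s / μ t) ^ (c + α) * μ t ^ (-θ) * ‖Φ t s w‖‖ := by
    filter_upwards [eventually_le_atBot s, eventually_lt_atBot 0] with t hts ht
    have hpull : P s w = Φ s t (P t (Φ t s w)) := by
      rw [hd.proj_evo_eq_evo_proj hgr, hΦ.apply_apply]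
    have hμs := hgr.pos s
    have hμt := hgr.pos t
    rw [norm_norm, Real.norm_of_nonneg (by positivity), hpull]
    simpa [Real.sign_of_neg ht, mul_assoc] using hd.norm_evo_proj_le hgr hts (Φ t s w)
  refine (IsBigO.of_bound K hbound).trans ?_
  refine (((hgr.isBigO_const_div_rpow s _ _).mul (isBigO_refl _ _)).mul
    (isBigO_refl _ _)).congr_right fun t => ?_
  rw [← Real.rpow_add (hgr.pos t), ← sub_eq_add_neg]

lemma isBigO_compl_atTop (hΦ : IsEvolutionOp A Φ) (hgr : GrowthRate μ)
    (hd : NuDWith μ (shiftEvo μ c Φ) P K α β θ ν) (s : ℝ) (w : EuclideanSpace ℝ (Fin n)) :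
    (fun _ : ℝ => ‖w - P s w‖) =O[atTop] fun t => μ t ^ (-(c + β) + ν) * ‖Φ t s w‖ := by
  have hbound : ∀ᶠ t in atTop,
      ‖‖w - P s w‖‖ ≤ K * ‖(μ s / μ t) ^ (c + β) * μ t ^ ν * ‖Φ t s w‖‖ := by
    filter_upwards [eventually_ge_atTop s, eventually_gt_atTop 0] with t hst ht
    have hpull : w - P s w = Φ s t (Φ t s w - P t (Φ t s w)) := by
      rw [hd.proj_evo_eq_evo_proj hgr, ← map_sub, hΦ.apply_apply]
    have hμs := hgr.pos s
    have hμt := hgr.pos t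
    rw [norm_norm, Real.norm_of_nonneg (by positivity), hpull]
    simpa [Real.sign_of_pos ht, mul_assoc] using hd.norm_evo_compl_le hgr hst (Φ t s w)
  refine (IsBigO.of_bound K hbound).trans ?_
  refine (((hgr.isBigO_const_div_rpow s _ _).mul (isBigO_refl _ _)).mul
    (isBigO_refl _ _)).congr_right fun t => ?_
  rw [← Real.rpow_add (hgr.pos t)]

lemma proj_eq_self_of_isBigO (hΦ : IsEvolutionOp A Φ) (hgr : GrowthRate μ)
    (hd : NuDWith μ (shiftEvo μ c Φ) P K α β θ ν) {s δ : ℝ} {v : EuclideanSpace ℝ (Fin n)}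
    (hδ : δ < c + (β - ν)) (hv : (fun t => ‖Φ t s v‖) =O[atTop] fun t => μ t ^ δ) :
    P s v = v := by
  have hO : (fun _ : ℝ => ‖v - P s v‖) =O[atTop] fun t => μ t ^ (-(c + β) + ν + δ) :=
    (hd.isBigO_compl_atTop hΦ hgr s v).trans
      (((isBigO_refl _ _).mul hv).congr_right fun t => by rw [← Real.rpow_add (hgr.pos t)])
  have h0 := hO.trans_tendsto (hgr.tendsto_rpow_atTop_of_neg (by linarith))
  rw [tendsto_const_nhds_iff, norm_eq_zero, sub_eq_zero] at h0
  exact h0.symm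

lemma proj_eq_zero_of_isBigO (hΦ : IsEvolutionOp A Φ) (hgr : GrowthRate μ)
    (hd : NuDWith μ (shiftEvo μ c Φ) P K α β θ ν) {s δ : ℝ} {v : EuclideanSpace ℝ (Fin n)}
    (hδ : c + α + θ < δ) (hv : (fun t => ‖Φ t s v‖) =O[atBot] fun t => μ t ^ δ) :
    P s v = 0 := by
  have hO : (fun _ : ℝ => ‖P s v‖) =O[atBot] fun t => μ t ^ (-(c + α) - θ + δ) :=
    (hd.isBigO_proj_atBot hΦ hgr s v).trans
      (((isBigO_refl _ _).mul hv).congr_right fun t => by rw [← Real.rpow_add (hgr.pos t)])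
  have h0 := hO.trans_tendsto (hgr.tendsto_rpow_atBot_of_pos (by linarith))
  rwa [tendsto_const_nhds_iff, norm_eq_zero] at h0

lemma isBigO_rpow_evo_of_proj_eq_zero (hΦ : IsEvolutionOp A Φ) (hgr : GrowthRate μ)
    (hd : NuDWith μ (shiftEvo μ c Φ) P K α β θ ν) {s : ℝ} {v : EuclideanSpace ℝ (Fin n)}
    (hPv : P s v = 0) (hv : v ≠ 0) :
    (fun t => μ t ^ (c + β - ν)) =O[atTop] fun t => ‖Φ t s v‖ := by
  have h := hd.isBigO_compl_atTop hΦ hgr s v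
  rw [hPv, sub_zero] at h
  refine (isBigO_self_const_mul (norm_ne_zero_iff.2 hv) _ _).trans
    ((h.mul (isBigO_refl (fun t => μ t ^ (c + β - ν)) _)).congr_right fun t => ?_)
  rw [mul_right_comm, ← Real.rpow_add (hgr.pos t), show -(c + β) + ν + (c + β - ν) = 0 by ring,
    Real.rpow_zero, one_mul]

end NuDWith

end Dichotomy

section Bootstrap

variable {n : ℕ} {A : ℝ → Op n} {Φ : ℝ → ℝ → Op n} {μ : ℝ → ℝ}

lemma isBigO_atTop_of_mem_Uset (hgr : GrowthRate μ) {s γ : ℝ} {v : EuclideanSpace ℝ (Fin n)}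
    (h : (s, v) ∈ Uset μ Φ γ) : (fun t => ‖Φ t s v‖) =O[atTop] fun t => μ t ^ γ := by
  obtain ⟨C, hC⟩ := h
  refine IsBigO.of_bound C ?_
  filter_upwards [eventually_ge_atTop 0] with t ht
  have hpos := Real.rpow_pos_of_pos (hgr.pos t) γ
  have hbound := hC t ht
  rw [Real.rpow_neg (hgr.pos t).le, ← div_eq_mul_inv, div_le_iff₀ hpos] at hbound
  rwa [norm_norm, Real.norm_of_nonneg hpos.le]

lemma isBigO_atBot_of_mem_Vset (hgr : GrowthRate μ) {s γ : ℝ} {v : EuclideanSpace ℝ (Fin n)}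
    (h : (s, v) ∈ Vset μ Φ γ) : (fun t => ‖Φ t s v‖) =O[atBot] fun t => μ t ^ γ := by
  obtain ⟨C, hC⟩ := h
  refine IsBigO.of_bound C ?_
  filter_upwards [eventually_le_atBot 0] with t ht
  have hpos := Real.rpow_pos_of_pos (hgr.pos t) γ
  have hbound := hC t ht
  rw [Real.rpow_neg (hgr.pos t).le, ← div_eq_mul_inv, div_le_iff₀ hpos] at hbound
  rwa [norm_norm, Real.norm_of_nonneg hpos.le]

lemma isBigO_atTop_of_Ioc_subset_resolventND (hΦ : IsEvolutionOp A Φ) (hgr : GrowthRate μ)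
    {s b γ : ℝ} {v : EuclideanSpace ℝ (Fin n)} (hres : Set.Ioc b γ ⊆ resolventND μ Φ)
    (hγ : (fun t => ‖Φ t s v‖) =O[atTop] fun t => μ t ^ γ) :
    ∀ x ∈ Set.Ioc b γ, (fun t => ‖Φ t s v‖) =O[atTop] fun t => μ t ^ x := by
  refine forall_mem_Ioc_of_step (fun δ δ' h hF => hF.trans (hgr.isBigO_rpow_atTop h))
    (fun c hc => ?_) hγ
  obtain ⟨P, K, α, β, θ, ν, hd⟩ := hres hc
  have ⟨_, _, _, hα, _, _, _, _, hβν, _, _⟩ := hd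
  have hε₁ := min_le_left (β - ν) (-α)
  have hε₂ := min_le_right (β - ν) (-α)
  refine ⟨min (β - ν) (-α) / 2, half_pos (lt_min hβν (neg_pos.2 hα)), fun hF => ?_⟩
  rw [← hd.proj_eq_self_of_isBigO hΦ hgr (by linarith) hF]
  exact (hd.isBigO_evo_proj_atTop hgr s v).trans (hgr.isBigO_rpow_atTop (by linarith))

lemma isBigO_atBot_of_Ico_subset_resolventND (hΦ : IsEvolutionOp A Φ) (hgr : GrowthRate μ)
    {s γ a : ℝ} {v : EuclideanSpace ℝ (Fin n)} (hres : Set.Ico γ a ⊆ resolventND μ Φ)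
    (hγ : (fun t => ‖Φ t s v‖) =O[atBot] fun t => μ t ^ γ) :
    ∀ x ∈ Set.Ico γ a, (fun t => ‖Φ t s v‖) =O[atBot] fun t => μ t ^ x := by
  refine forall_mem_Ico_of_step (fun δ δ' h hG => hG.trans (hgr.isBigO_rpow_atBot h))
    (fun c hc => ?_) hγ
  obtain ⟨P, K, α, β, θ, ν, hd⟩ := hres hc
  have ⟨_, _, _, _, hβ, _, _, hαθ, _, _, _⟩ := hd
  have hε₁ := min_le_left β (-(α + θ))
  have hε₂ := min_le_right β (-(α + θ))
  refine ⟨min β (-(α + θ)) / 2, half_pos (lt_min hβ (neg_pos.2 hαθ)), fun hG => ?_⟩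
  have hcompl : v - P s v = v := by
    rw [hd.proj_eq_zero_of_isBigO hΦ hgr (by linarith) hG, sub_zero]
  rw [← hcompl]
  exact (hd.isBigO_evo_compl_atBot hgr s v).trans (hgr.isBigO_rpow_atBot (by linarith))

end Bootstrap

theorem stmt19_general (n : ℕ) (A : ℝ → Op n)
    (Φ : ℝ → ℝ → Op n) (hΦ : IsEvolutionOp A Φ)
    (μ : ℝ → ℝ) (hgr : GrowthRate μ)
    (a b γ' γ'' : ℝ) (h1 : γ' < a) (h3 : b < γ'')
    (hres1 : Set.Ico γ' a ⊆ resolventND μ Φ)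
    (hres2 : Set.Ioc b γ'' ⊆ resolventND μ Φ) :
    ∀ s v, (s, v) ∈ Uset μ Φ γ'' → (s, v) ∈ Vset μ Φ γ' → v ≠ 0 →
      a ≤ Filter.liminf (fun t => Real.log ‖Φ t s v‖ / Real.log (μ t)) atTop ∧
      Filter.liminf (fun t => Real.log ‖Φ t s v‖ / Real.log (μ t)) atTop ≤
        Filter.limsup (fun t => Real.log ‖Φ t s v‖ / Real.log (μ t)) atTop ∧
      Filter.limsup (fun t => Real.log ‖Φ t s v‖ / Real.log (μ t)) atTop ≤ b := by
  intro s v hU hV hv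
  have hN : ∀ t, 0 < ‖Φ t s v‖ := fun t =>
    norm_pos_iff.2 fun h => hv (by simpa [h] using (hΦ.apply_apply t s v).symm)
  have hup := isBigO_atTop_of_Ioc_subset_resolventND hΦ hgr hres2 (isBigO_atTop_of_mem_Uset hgr hU)
  have hlow := isBigO_atBot_of_Ico_subset_resolventND hΦ hgr hres1 (isBigO_atBot_of_mem_Vset hgr hV)
  refine le_liminf_and_liminf_le_limsup_and_limsup_le (fun y hy => ?_) (fun y hy => ?_)
  · have hx : max y γ' ∈ Set.Ico γ' a := ⟨le_max_right y γ', max_lt hy h1⟩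
    obtain ⟨P, K, α, β, θ, ν, hd⟩ := hres1 hx
    have ⟨_, _, _, _, _, _, _, hαθ, hβν, _, _⟩ := hd
    have hPv := hd.proj_eq_zero_of_isBigO hΦ hgr (by linarith) (hlow _ hx)
    exact hgr.eventually_le_log_div_log (hd.isBigO_rpow_evo_of_proj_eq_zero hΦ hgr hPv hv)
      (by linarith [le_max_left y γ'])
  · have hx : min ((b + y) / 2) γ'' ∈ Set.Ioc b γ'' :=
      ⟨lt_min (by linarith) h3, min_le_right _ _⟩
    exact hgr.eventually_log_div_log_le hN (hup _ hx)
      (by linarith [min_le_left ((b + y) / 2) γ''])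

/-- if [a,b] is a bounded connected component of the spectrum,
γ' < a and b < γ'' are resolvent points (with (γ',a) and (b,γ'') in the resolvent set),
and (s,v) ∈ W = U_{γ''} ∩ V_{γ'} with v ≠ 0, then the μ-Lyapunov exponents satisfy
a ≤ λ⁻(v) ≤ λ⁺(v) ≤ b. -/
theorem stmt19 (n : ℕ) (A : ℝ → Op n) (hA : Continuous A)
    (Φ : ℝ → ℝ → Op n) (hΦ : IsEvolutionOp A Φ)
    (μ : ℝ → ℝ) (hgr : GrowthRate μ) (hdiff : Differentiable ℝ μ)
    (a b γ' γ'' : ℝ) (h1 : γ' < a) (h2 : a ≤ b) (h3 : b < γ'')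
    (hspec : Set.Icc a b ⊆ spectrumND μ Φ)
    (hres1 : Set.Ico γ' a ⊆ resolventND μ Φ)
    (hres2 : Set.Ioc b γ'' ⊆ resolventND μ Φ) :
    ∀ s v, (s, v) ∈ Uset μ Φ γ'' → (s, v) ∈ Vset μ Φ γ' → v ≠ 0 →
      a ≤ Filter.liminf (fun t => Real.log ‖Φ t s v‖ / Real.log (μ t)) atTop ∧
      Filter.liminf (fun t => Real.log ‖Φ t s v‖ / Real.log (μ t)) atTop ≤
        Filter.limsup (fun t => Real.log ‖Φ t s v‖ / Real.log (μ t)) atTop ∧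
      Filter.limsup (fun t => Real.log ‖Φ t s v‖ / Real.log (μ t)) atTop ≤ b :=
  stmt19_general n A Φ hΦ μ hgr a b γ' γ'' h1 h3 hres1 hres2
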